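/- If Γ ⊢_{HWFD̂} A then Γ ⊢_{NWFD̂} A, and conversely if Γ ⊢_{NWFD̂} A then Γ ⊢_{HWFD̂} A; that is, the restricted Hilbert system WFD̂ and the natural deduction system NWFD̂ derive the same formulas from any set of assumptions Γ. -/

import Mathlib

/-- Formulas of subintuitionistic propositional logic. -/
inductive Fml : Type
  | atom : ℕ → Fml
  | bot  : Fml
  | and  : Fml → Fml → Fml
  | or   : Fml → Fml → Fml
  | imp  : Fml → Fml → Fml
deriving DecidableEq

/-- `A ↔ B` abbreviates `(A → B) ∧ (B → A)`. -/
def Fml.biimp (A B : Fml) : Fml := (A.imp B).and (B.imp A)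

/-- The extra axiom schemes / rules among I, C, D, Ĉ, D̂, N, N₂. -/
inductive ExtAx : Type
  | I | C | D | Chat | Dhat | N | N2
deriving DecidableEq

/-- Theorems of the Hilbert system WF extended with the schemes/rules in `E`
(derivations with no assumptions; all rules unrestricted here). -/
inductive HThm (E : Set ExtAx) : Fml → Prop
  | ax1 (A B : Fml)   : HThm E (A.imp (A.or B))
  | ax2 (A B : Fml)   : HThm E (B.imp (A.or B))
  | ax3 (A B : Fml)   : HThm E ((A.and B).imp A)
  | ax4 (A B : Fml)   : HThm E ((A.and B).imp B)
  | ax7 (A B C : Fml) : HThm E ((A.and (B.or C)).imp ((A.and B).or (A.and C)))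
  | ax8 (A : Fml)     : HThm E (A.imp A)
  | ax14 (A : Fml)    : HThm E (Fml.bot.imp A)
  | mp {A B : Fml}    : HThm E A → HThm E (A.imp B) → HThm E B
  | af {A : Fml} (B : Fml) : HThm E A → HThm E (B.imp A)
  | tr {A B C : Fml}  : HThm E (A.imp B) → HThm E (B.imp C) → HThm E (A.imp C)
  | rc {A B C : Fml}  : HThm E (A.imp B) → HThm E (A.imp C) → HThm E (A.imp (B.and C))
  | rd {A B C : Fml}  : HThm E (A.imp C) → HThm E (B.imp C) → HThm E ((A.or B).imp C)
  | conj {A B : Fml}  : HThm E A → HThm E B → HThm E (A.and B)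
  | re {A B C D : Fml} : HThm E (A.biimp B) → HThm E (C.biimp D) →
      HThm E ((A.imp C).biimp (B.imp D))
  | axI (A B C : Fml) : ExtAx.I ∈ E →
      HThm E (((A.imp B).and (B.imp C)).imp (A.imp C))
  | axC (A B C : Fml) : ExtAx.C ∈ E →
      HThm E (((A.imp B).and (A.imp C)).imp (A.imp (B.and C)))
  | axD (A B C : Fml) : ExtAx.D ∈ E →
      HThm E (((A.imp C).and (B.imp C)).imp ((A.or B).imp C))
  | axChat (A B C : Fml) : ExtAx.Chat ∈ E →
      HThm E ((A.imp (B.and C)).imp ((A.imp B).and (A.imp C)))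
  | axDhat (A B C : Fml) : ExtAx.Dhat ∈ E →
      HThm E (((A.or B).imp C).imp ((A.imp C).and (B.imp C)))
  | ruleN {A B C D : Fml} : ExtAx.N ∈ E →
      HThm E (A.imp (B.or C)) → HThm E (C.imp (A.or D)) →
      HThm E ((A.and D).imp B) → HThm E ((C.and B).imp D) →
      HThm E ((A.imp B).biimp (C.imp D))
  | ruleN2 {A B C D : Fml} : ExtAx.N2 ∈ E →
      HThm E (C.imp (A.or D)) → HThm E ((C.and B).imp D) →
      HThm E ((A.imp B).imp (C.imp D))

/-- Restricted derivability from assumptions in the Hilbert system WF + `E`: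
besides assumptions and theorems, only the conjunction rule is unrestricted, and
modus ponens may be used only when the major premise `A → B` is a theorem
(derived with no assumptions); all other rules are confined to theorems. -/
inductive HDer (E : Set ExtAx) (Γ : Set Fml) : Fml → Prop
  | hyp {A : Fml}  : A ∈ Γ → HDer E Γ A
  | thm {A : Fml}  : HThm E A → HDer E Γ A
  | conj {A B : Fml} : HDer E Γ A → HDer E Γ B → HDer E Γ (A.and B)
  | mp {A B : Fml} : HDer E Γ A → HThm E (A.imp B) → HDer E Γ B

/-- Tags for the optional implication-introduction rules of the natural
deduction systems. -/
inductive NRule : Type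
  | impI1 | impI2 | impN | impN2 | impChat | impDhat | impAnd | impOr | impTr
deriving DecidableEq

/-- Natural deduction derivations for the system with optional rules `R`.
`Deriv R Γ A` is a derivation of `A` all of whose open assumptions lie in `Γ`. -/
inductive Deriv (R : Set NRule) : Set Fml → Fml → Type
  | hyp (Γ : Set Fml) (A : Fml) : A ∈ Γ → Deriv R Γ A
  | andI {Γ : Set Fml} {A B : Fml} :
      Deriv R Γ A → Deriv R Γ B → Deriv R Γ (A.and B)
  | andE1 {Γ : Set Fml} {A B : Fml} :
      Deriv R Γ (A.and B) → Deriv R Γ A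
  | andE2 {Γ : Set Fml} {A B : Fml} :
      Deriv R Γ (A.and B) → Deriv R Γ B
  | orI1 {Γ : Set Fml} {A : Fml} (B : Fml) :
      Deriv R Γ A → Deriv R Γ (A.or B)
  | orI2 {Γ : Set Fml} (A : Fml) {B : Fml} :
      Deriv R Γ B → Deriv R Γ (A.or B)
  | orE {Γ : Set Fml} {A B C : Fml} :
      Deriv R Γ (A.or B) → Deriv R (insert A Γ) C → Deriv R (insert B Γ) C →
      Deriv R Γ C
  | botE {Γ : Set Fml} (A : Fml) :
      Deriv R Γ Fml.bot → Deriv R Γ A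
  | impI {Γ : Set Fml} {A B : Fml} :
      Deriv R {A} B → Deriv R Γ (A.imp B)
  | impE {Γ : Set Fml} {A B : Fml} :
      Deriv R Γ A → Deriv R (∅ : Set Fml) (A.imp B) → Deriv R Γ B
  | impI1 {Γ : Set Fml} {A B D : Fml} :
      NRule.impI1 ∈ R → Deriv R {B} D → Deriv R {D} B →
      Deriv R Γ ((A.imp B).imp (A.imp D))
  | impI2 {Γ : Set Fml} {A B D : Fml} :
      NRule.impI2 ∈ R → Deriv R {B} D → Deriv R {D} B →
      Deriv R Γ ((B.imp A).imp (D.imp A))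
  | impIN {Γ : Set Fml} {A B C D : Fml} :
      NRule.impN ∈ R →
      Deriv R {A} (C.or B) → Deriv R {D} B → Deriv R {C} (A.or D) → Deriv R {B} D →
      Deriv R Γ ((A.imp B).imp (C.imp D))
  | impIN2 {Γ : Set Fml} {A B C D : Fml} :
      NRule.impN2 ∈ R →
      Deriv R {C} (A.or D) → Deriv R {B} D →
      Deriv R Γ ((A.imp B).imp (C.imp D))
  | impIChat {Γ : Set Fml} {A B : Fml} (C : Fml) :
      NRule.impChat ∈ R → Deriv R {A} B →
      Deriv R Γ ((C.imp A).imp (C.imp B))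
  | impIDhat {Γ : Set Fml} {A B : Fml} (C : Fml) :
      NRule.impDhat ∈ R → Deriv R {A} B →
      Deriv R Γ ((B.imp C).imp (A.imp C))
  | impIAnd {Γ : Set Fml} {A B C : Fml} :
      NRule.impAnd ∈ R → Deriv R Γ (A.imp B) → Deriv R Γ (A.imp C) →
      Deriv R Γ (A.imp (B.and C))
  | impIOr {Γ : Set Fml} {A B C : Fml} :
      NRule.impOr ∈ R → Deriv R Γ (A.imp C) → Deriv R Γ (B.imp C) →
      Deriv R Γ ((A.or B).imp C)
  | impITr {Γ : Set Fml} {A B C : Fml} :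
      NRule.impTr ∈ R → Deriv R Γ (A.imp B) → Deriv R Γ (B.imp C) →
      Deriv R Γ (A.imp C)

/-- `Γ ⊢ A` in the natural deduction system with optional rules `R`. -/
def NDer (R : Set NRule) (Γ : Set Fml) (A : Fml) : Prop :=
  Nonempty (Deriv R Γ A)

/-- A derivation may serve as the major premise of an elimination rule in a
normal derivation: it is an assumption or ends with an elimination rule
different from ∨E (i.e. ∧E or →E). -/
def Deriv.MajorOK : ∀ {R : Set NRule} {Γ : Set Fml} {A : Fml}, Deriv R Γ A → Prop
  | _, _, _, .hyp _ _ _ => True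
  | _, _, _, .andE1 _   => True
  | _, _, _, .andE2 _   => True
  | _, _, _, .impE _ _  => True
  | _, _, _, _          => False

/-- A derivation is normal if every major premise of an elimination rule is
either an assumption or the conclusion of an elimination rule different
from ∨E. -/
def Deriv.Normal {R : Set NRule} : ∀ {Γ : Set Fml} {A : Fml}, Deriv R Γ A → Prop
  | _, _, .hyp _ _ _ => True
  | _, _, .andI d e => d.Normal ∧ e.Normal
  | _, _, .andE1 d => d.MajorOK ∧ d.Normal
  | _, _, .andE2 d => d.MajorOK ∧ d.Normal
  | _, _, .orI1 _ d => d.Normal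
  | _, _, .orI2 _ d => d.Normal
  | _, _, .orE d e f => d.MajorOK ∧ d.Normal ∧ e.Normal ∧ f.Normal
  | _, _, .botE _ d => d.Normal
  | _, _, .impI d => d.Normal
  | _, _, .impE d e => e.MajorOK ∧ d.Normal ∧ e.Normal
  | _, _, .impI1 _ d e => d.Normal ∧ e.Normal
  | _, _, .impI2 _ d e => d.Normal ∧ e.Normal
  | _, _, .impIN _ d e f g => d.Normal ∧ e.Normal ∧ f.Normal ∧ g.Normal
  | _, _, .impIN2 _ d e => d.Normal ∧ e.Normal
  | _, _, .impIChat _ _ d => d.Normal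
  | _, _, .impIDhat _ _ d => d.Normal
  | _, _, .impIAnd _ d e => d.Normal ∧ e.Normal
  | _, _, .impIOr _ d e => d.Normal ∧ e.Normal
  | _, _, .impITr _ d e => d.Normal ∧ e.Normal

/-!
Hilbert to natural deduction: every axiom and rule of WFD̂ is derivable in NWFD̂; rule RE is
obtained by chaining →I₁ and →I₂, and axiom D̂ by (→_D̂ I) applied to the two ∨-introductions.

Natural deduction to Hilbert: the steps that discharge assumptions (→I, ∨E, →I₁, →I₂, →_D̂ I)
need a deduction theorem for the restricted consequence relation. Since assumptions are acted on
only by Conj and by MP with a theorem as major premise, a derivation of `C` from `Γ ∪ {A}`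
compresses into one formula `D` derivable from `Γ` together with a theorem `A ∧ D → C`. For
`Γ = ∅` this gives `⊢ A → C`, and for ∨E it combines with distributivity.
-/

abbrev WFDhat : Set ExtAx := {ExtAx.Dhat}

abbrev NWFDhat : Set NRule := {NRule.impI1, NRule.impI2, NRule.impDhat}

namespace HThm

variable {E : Set ExtAx}

theorem and_mono {A A' B B' : Fml} (hA : HThm E (A.imp A')) (hB : HThm E (B.imp B')) :
    HThm E ((A.and B).imp (A'.and B')) :=
  .rc (.tr (.ax3 A B) hA) (.tr (.ax4 A B) hB)

theorem and_swap (A B : Fml) : HThm E ((A.and B).imp (B.and A)) :=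
  .rc (.ax4 A B) (.ax3 A B)

theorem rd_and {A B C D : Fml} (hA : HThm E ((A.and D).imp C)) (hB : HThm E ((B.and D).imp C)) :
    HThm E (((A.or B).and D).imp C) :=
  .tr (and_swap _ _) (.tr (.ax7 D A B) (.rd (.tr (and_swap D A) hA) (.tr (and_swap D B) hB)))

theorem imp_congr_right {A B D : Fml} (hBD : HThm E (B.imp D)) (hDB : HThm E (D.imp B)) :
    HThm E ((A.imp B).imp (A.imp D)) :=
  .mp (.re (.conj (.ax8 A) (.ax8 A)) (.conj hBD hDB)) (.ax3 _ _)

theorem imp_congr_left {A B D : Fml} (hBD : HThm E (B.imp D)) (hDB : HThm E (D.imp B)) :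
    HThm E ((B.imp A).imp (D.imp A)) :=
  .mp (.re (.conj hBD hDB) (.conj (.ax8 A) (.ax8 A))) (.ax3 _ _)

/-- `A ∨ B` is equivalent to `B` when `A → B`, so `B → C` gives `A ∨ B → C`, which D̂ splits. -/
theorem imp_antitone_of_dhat {A B C : Fml} (hE : ExtAx.Dhat ∈ E) (h : HThm E (A.imp B)) :
    HThm E ((B.imp C).imp (A.imp C)) :=
  .tr (.tr (imp_congr_left (.ax2 A B) (.rd h (.ax8 B))) (.axDhat A B C hE)) (.ax3 _ _)

end HThm

namespace HDer

variable {E : Set ExtAx} {Γ : Set Fml}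

theorem toHThm {A : Fml} (h : HDer E ∅ A) : HThm E A := by
  induction h with
  | hyp h => exact absurd h (Set.notMem_empty _)
  | thm h => exact h
  | conj _ _ ih₁ ih₂ => exact .conj ih₁ ih₂
  | mp _ hAB ih => exact .mp ih hAB

theorem exists_and_imp_of_insert {A C : Fml} (h : HDer E (insert A Γ) C) :
    ∃ D, HDer E Γ D ∧ HThm E ((A.and D).imp C) := by
  induction h with
  | @hyp B hB =>
    rcases Set.mem_insert_iff.1 hB with rfl | hB
    · exact ⟨B.imp B, .thm (.ax8 B), .ax3 _ _⟩
    · exact ⟨B, .hyp hB, .ax4 _ _⟩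
  | thm h => exact ⟨_, .thm h, .ax4 _ _⟩
  | conj _ _ ih₁ ih₂ =>
    obtain ⟨D₁, hD₁, h₁⟩ := ih₁
    obtain ⟨D₂, hD₂, h₂⟩ := ih₂
    exact ⟨D₁.and D₂, .conj hD₁ hD₂,
      .rc (.tr (.and_mono (.ax8 A) (.ax3 D₁ D₂)) h₁)
        (.tr (.and_mono (.ax8 A) (.ax4 D₁ D₂)) h₂)⟩
  | mp _ hBC ih =>
    obtain ⟨D, hD, h⟩ := ih
    exact ⟨D, hD, .tr h hBC⟩

theorem deduction {A B : Fml} (h : HDer E {A} B) : HThm E (A.imp B) := by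
  rw [← insert_empty_eq] at h
  obtain ⟨D, hD, hAD⟩ := h.exists_and_imp_of_insert
  exact .tr (.rc (.ax8 A) (.af A hD.toHThm)) hAD

theorem orE {A B C : Fml} (hAB : HDer E Γ (A.or B)) (hA : HDer E (insert A Γ) C)
    (hB : HDer E (insert B Γ) C) : HDer E Γ C := by
  obtain ⟨D₁, hD₁, h₁⟩ := hA.exists_and_imp_of_insert
  obtain ⟨D₂, hD₂, h₂⟩ := hB.exists_and_imp_of_insert
  exact .mp (.conj hAB (.conj hD₁ hD₂))
    (.rd_and (.tr (.and_mono (.ax8 A) (.ax3 D₁ D₂)) h₁)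
      (.tr (.and_mono (.ax8 B) (.ax4 D₁ D₂)) h₂))

end HDer

namespace Deriv

variable {R : Set NRule}

def weaken : ∀ {Γ Δ : Set Fml} {A : Fml}, Deriv R Γ A → Γ ⊆ Δ → Deriv R Δ A
  | _, _, _, .hyp _ _ h, hs => .hyp _ _ (hs h)
  | _, _, _, .andI d e, hs => .andI (d.weaken hs) (e.weaken hs)
  | _, _, _, .andE1 d, hs => .andE1 (d.weaken hs)
  | _, _, _, .andE2 d, hs => .andE2 (d.weaken hs)
  | _, _, _, .orI1 B d, hs => .orI1 B (d.weaken hs)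
  | _, _, _, .orI2 A d, hs => .orI2 A (d.weaken hs)
  | _, _, _, .orE d e f, hs =>
    .orE (d.weaken hs) (e.weaken (Set.insert_subset_insert hs))
      (f.weaken (Set.insert_subset_insert hs))
  | _, _, _, .botE A d, hs => .botE A (d.weaken hs)
  | _, _, _, .impI d, _ => .impI d
  | _, _, _, .impE d e, hs => .impE (d.weaken hs) e
  | _, _, _, .impI1 h d e, _ => .impI1 h d e
  | _, _, _, .impI2 h d e, _ => .impI2 h d e
  | _, _, _, .impIN h a b c d, _ => .impIN h a b c d
  | _, _, _, .impIN2 h a b, _ => .impIN2 h a b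
  | _, _, _, .impIChat C h d, _ => .impIChat C h d
  | _, _, _, .impIDhat C h d, _ => .impIDhat C h d
  | _, _, _, .impIAnd h d e, hs => .impIAnd h (d.weaken hs) (e.weaken hs)
  | _, _, _, .impIOr h d e, hs => .impIOr h (d.weaken hs) (e.weaken hs)
  | _, _, _, .impITr h d e, hs => .impITr h (d.weaken hs) (e.weaken hs)

def assume (A : Fml) : Deriv R {A} A := .hyp _ _ rfl

def ofImp {A B : Fml} (d : Deriv R ∅ (A.imp B)) : Deriv R {A} B := .impE (assume A) d

def comp {Γ : Set Fml} {A B C : Fml} (d : Deriv R ∅ (A.imp B)) (e : Deriv R ∅ (B.imp C)) :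
    Deriv R Γ (A.imp C) :=
  .impI (.impE d.ofImp e)

def distrib {Γ : Set Fml} (A B C : Fml) :
    Deriv R Γ ((A.and (B.or C)).imp ((A.and B).or (A.and C))) :=
  have left : ∀ X, Deriv R (insert X {A.and (B.or C)}) A :=
    fun X => .andE1 (.hyp _ _ (Set.mem_insert_of_mem X rfl))
  .impI (.orE (.andE2 (assume _))
    (.orI1 _ (.andI (left B) (.hyp _ _ (Set.mem_insert _ _))))
    (.orI2 _ (.andI (left C) (.hyp _ _ (Set.mem_insert _ _)))))

def re {Γ : Set Fml} {A B C D : Fml} (h₁ : NRule.impI1 ∈ R) (h₂ : NRule.impI2 ∈ R)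
    (dAB : Deriv R ∅ (A.biimp B)) (dCD : Deriv R ∅ (C.biimp D)) :
    Deriv R Γ ((A.imp C).biimp (B.imp D)) :=
  have hAB : Deriv R {A} B := ofImp (.andE1 dAB)
  have hBA : Deriv R {B} A := ofImp (.andE2 dAB)
  have hCD : Deriv R {C} D := ofImp (.andE1 dCD)
  have hDC : Deriv R {D} C := ofImp (.andE2 dCD)
  .andI (comp (.impI1 h₁ hCD hDC) (.impI2 h₂ hAB hBA))
    (comp (.impI1 h₁ hDC hCD) (.impI2 h₂ hBA hAB))

end Deriv

theorem HThm.toNDer {A : Fml} (h : HThm WFDhat A) : NDer NWFDhat ∅ A := by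
  induction h with
  | ax1 A B => exact ⟨.impI (.orI1 B (.assume A))⟩
  | ax2 A B => exact ⟨.impI (.orI2 A (.assume B))⟩
  | ax3 A B => exact ⟨.impI (.andE1 (.assume (A.and B)))⟩
  | ax4 A B => exact ⟨.impI (.andE2 (.assume (A.and B)))⟩
  | ax7 A B C => exact ⟨.distrib A B C⟩
  | ax8 A => exact ⟨.impI (.assume A)⟩
  | ax14 A => exact ⟨.impI (.botE A (.assume Fml.bot))⟩
  | mp _ _ ih₁ ih₂ =>
    obtain ⟨d₁⟩ := ih₁
    obtain ⟨d₂⟩ := ih₂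
    exact ⟨.impE d₁ d₂⟩
  | af B _ ih =>
    obtain ⟨d⟩ := ih
    exact ⟨.impI (d.weaken (Set.empty_subset _))⟩
  | tr _ _ ih₁ ih₂ =>
    obtain ⟨d₁⟩ := ih₁
    obtain ⟨d₂⟩ := ih₂
    exact ⟨d₁.comp d₂⟩
  | rc _ _ ih₁ ih₂ =>
    obtain ⟨d₁⟩ := ih₁
    obtain ⟨d₂⟩ := ih₂
    exact ⟨.impI (.andI d₁.ofImp d₂.ofImp)⟩
  | rd _ _ ih₁ ih₂ =>
    obtain ⟨d₁⟩ := ih₁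
    obtain ⟨d₂⟩ := ih₂
    exact ⟨.impI (.orE (.assume _) (.impE (.hyp _ _ (Set.mem_insert _ _)) d₁)
      (.impE (.hyp _ _ (Set.mem_insert _ _)) d₂))⟩
  | conj _ _ ih₁ ih₂ =>
    obtain ⟨d₁⟩ := ih₁
    obtain ⟨d₂⟩ := ih₂
    exact ⟨.andI d₁ d₂⟩
  | re _ _ ih₁ ih₂ =>
    obtain ⟨dAB⟩ := ih₁
    obtain ⟨dCD⟩ := ih₂
    exact ⟨.re (by simp) (by simp) dAB dCD⟩
  | axDhat A B C =>
    exact ⟨.impI (.andI (.ofImp (.impIDhat C (by simp) (.orI1 B (.assume A))))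
      (.ofImp (.impIDhat C (by simp) (.orI2 A (.assume B)))))⟩
  | axI _ _ _ h | axC _ _ _ h | axD _ _ _ h | axChat _ _ _ h | ruleN h | ruleN2 h => simp at h

theorem HDer.toNDer {Γ : Set Fml} {A : Fml} (h : HDer WFDhat Γ A) : NDer NWFDhat Γ A := by
  induction h with
  | hyp h => exact ⟨.hyp _ _ h⟩
  | thm h =>
    obtain ⟨d⟩ := h.toNDer
    exact ⟨d.weaken (Set.empty_subset _)⟩
  | conj _ _ ih₁ ih₂ =>
    obtain ⟨d₁⟩ := ih₁
    obtain ⟨d₂⟩ := ih₂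
    exact ⟨.andI d₁ d₂⟩
  | mp _ hAB ih =>
    obtain ⟨d⟩ := ih
    obtain ⟨e⟩ := hAB.toNDer
    exact ⟨.impE d e⟩

theorem Deriv.toHDer {Γ : Set Fml} {A : Fml} (d : Deriv NWFDhat Γ A) : HDer WFDhat Γ A := by
  induction d with
  | hyp _ _ h => exact .hyp h
  | andI _ _ ih₁ ih₂ => exact .conj ih₁ ih₂
  | andE1 _ ih => exact .mp ih (.ax3 _ _)
  | andE2 _ ih => exact .mp ih (.ax4 _ _)
  | orI1 _ _ ih => exact .mp ih (.ax1 _ _)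
  | orI2 _ _ ih => exact .mp ih (.ax2 _ _)
  | orE _ _ _ ih ih₁ ih₂ => exact ih.orE ih₁ ih₂
  | botE _ _ ih => exact .mp ih (.ax14 _)
  | impI _ ih => exact .thm ih.deduction
  | impE _ _ ih₁ ih₂ => exact .mp ih₁ ih₂.toHThm
  | impI1 _ _ _ ih₁ ih₂ => exact .thm (.imp_congr_right ih₁.deduction ih₂.deduction)
  | impI2 _ _ _ ih₁ ih₂ => exact .thm (.imp_congr_left ih₁.deduction ih₂.deduction)
  | impIDhat _ _ _ ih => exact .thm (.imp_antitone_of_dhat rfl ih.deduction)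
  | impIN h | impIN2 h | impIChat _ h | impIAnd h | impIOr h | impITr h => simp at h

theorem hilbert_iff_natded_WFDhat (Γ : Set Fml) (A : Fml) :
    HDer ({ExtAx.Dhat} : Set ExtAx) Γ A ↔ NDer {NRule.impI1, NRule.impI2, NRule.impDhat} Γ A :=
  ⟨HDer.toNDer, fun ⟨d⟩ => d.toHDer⟩
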